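/- In the Eisenberg–Noe setting (α_x = α_L = 1) under the regularity assumption (p̄_i > 0 and Σ_{j=1}^n π_{ij} < 1 for every i ≤ n), let X : Ω → ℝⁿ₊ be an integrable random endowment vector on a probability space (Ω, 𝓕, ℙ), let U be a random variable uniformly distributed on [0,1] on the same space, and let Z be the comonotonic version of X given by Z_i = F_{X_i}^{-1}(U), where F_{X_i}^{-1}(u) = inf{t ∈ ℝ₊ : ℙ(X_i ≤ t) ≥ u}. Then the total expected equity of the banking sector is maximized by the comonotonic endowments: Σ_{i=1}^n 𝔼[V_i(X)⁺] ≤ Σ_{i=1}^n 𝔼[V_i(Z)⁺]. -/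

import Mathlib

open Matrix BigOperators MeasureTheory

noncomputable section

/-- Total liabilities `p̄_i = Σ_{j=1}^{n+1} L_{ij}`. -/
def pbar {n : ℕ} (L : Matrix (Fin n) (Fin (n + 1)) ℝ) (i : Fin n) : ℝ :=
  ∑ j, L i j

/-- Relative liabilities `π_{ij} = L_{ij} / p̄_i` if `p̄_i > 0`, else `0`. -/
def relLiab {n : ℕ} (L : Matrix (Fin n) (Fin (n + 1)) ℝ) (i j : Fin n) : ℝ :=
  if 0 < pbar L i then L i j.castSucc / pbar L i else 0

/-- `p` is the greatest clearing payment vector for endowments `x` in the Eisenberg–Noe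
setting: the greatest fixed point of `p ↦ p̄ ∧ (x + Πᵀ p)` on `[0, p̄]`. -/
def IsGreatestClearingPayment {n : ℕ} (L : Matrix (Fin n) (Fin (n + 1)) ℝ)
    (x p : Fin n → ℝ) : Prop :=
  IsGreatest {q : Fin n → ℝ | (∀ i, 0 ≤ q i ∧ q i ≤ pbar L i) ∧
    ∀ i, q i = min (pbar L i) (x i + ∑ j, relLiab L j i * q j)} p

/-!
At a clearing vector `p`, bank `i` has equity `x i + (Πᵀ p) i - p i`, so the total equity is
`∑ i, x i` minus the payment `∑ j, π_{j,n+1} p j` to society. The comonotone vector `Z` has the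
same marginals as `X`, so only the expected payment to society differs. Along the clearing
iteration started at `p̄` the payment is a bounded, continuous, submodular function of the
endowments (`min c ·` preserves submodularity of monotone functions), and the iteration converges
because `Πᵀ` contracts the `ℓ¹` norm under the regularity assumption. Lorentz's inequality, that
among random vectors with given marginals the comonotone one minimises the expectation of such a
function, gives the claim in the limit.

Lorentz's inequality is reduced by discretisation to weights on a finite product of chains, where
a chain-supported weight is determined by its marginals (its distribution function is the minimum
of the marginal ones) and uncrossing shows that some chain-supported weight is optimal.
-/

open Function

def IsSubmodular {β : Type*} [Lattice β] (f : β → ℝ) : Prop :=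
  ∀ a b, f (a ⊔ b) + f (a ⊓ b) ≤ f a + f b

section Submodular

open Finset

variable {β : Type*} [Lattice β]

lemma IsSubmodular.add {f g : β → ℝ} (hf : IsSubmodular f) (hg : IsSubmodular g) :
    IsSubmodular fun x => f x + g x :=
  fun a b => by linarith [hf a b, hg a b]

lemma IsSubmodular.sum_mul {ι : Type*} [Fintype ι] {c : ι → ℝ} {f : ι → β → ℝ} (hc : 0 ≤ c)
    (hf : ∀ j, IsSubmodular (f j)) : IsSubmodular fun x => ∑ j, c j * f j x := by
  intro a b
  simp only [← sum_add_distrib, ← mul_add]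
  exact sum_le_sum fun j _ => mul_le_mul_of_nonneg_left (hf j a b) (hc j)

lemma IsSubmodular.min_const {f : β → ℝ} (hf : IsSubmodular f) (hmono : Monotone f) (c : ℝ) :
    IsSubmodular fun x => min c (f x) := by
  intro a b
  have ha := hmono (le_sup_left : a ≤ a ⊔ b)
  have hb := hmono (le_sup_right : b ≤ a ⊔ b)
  have hab := hf a b
  simp only [min_def]
  split_ifs <;> linarith

lemma isSubmodular_apply {ι : Type*} (i : ι) : IsSubmodular fun x : ι → ℝ => x i :=
  fun a b => (max_add_min (a i) (b i)).le

lemma IsSubmodular.comp_monotone {ι α γ : Type*} [LinearOrder α] [LinearOrder γ]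
    {g : (ι → γ) → ℝ} (hg : IsSubmodular g) {e : α → γ} (he : Monotone e) :
    IsSubmodular fun v : ι → α => g fun i => e (v i) := by
  intro a b
  have hsup : (fun i => e ((a ⊔ b) i)) = (fun i => e (a i)) ⊔ fun i => e (b i) :=
    funext fun i => he.map_max
  have hinf : (fun i => e ((a ⊓ b) i)) = (fun i => e (a i)) ⊓ fun i => e (b i) :=
    funext fun i => he.map_min
  simpa only [hsup, hinf] using hg _ _

end Submodular

section Uncross

variable {V : Type*} [Lattice V] [DecidableEq V]

def uncross (w : V → ℝ) (a b : V) : V → ℝ :=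
  w + min (w a) (w b) •
    (Pi.single (a ⊔ b) 1 + Pi.single (a ⊓ b) 1 - Pi.single a 1 - Pi.single b 1)

lemma uncross_dotProduct [Fintype V] (w : V → ℝ) (a b : V) (h : V → ℝ) :
    uncross w a b ⬝ᵥ h = w ⬝ᵥ h + min (w a) (w b) * (h (a ⊔ b) + h (a ⊓ b) - h a - h b) := by
  simp [uncross, add_dotProduct, sub_dotProduct, smul_dotProduct, single_dotProduct]

lemma uncross_nonneg {w : V → ℝ} (hw : 0 ≤ w) {a b : V} (hab : a ≠ b) : 0 ≤ uncross w a b := by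
  intro v
  have h₁ := min_le_left (w a) (w b)
  have h₂ := min_le_right (w a) (w b)
  have h₃ : 0 ≤ min (w a) (w b) := le_min (hw a) (hw b)
  have hv : 0 ≤ w v := hw v
  simp only [uncross, Pi.zero_apply, Pi.add_apply, Pi.smul_apply, Pi.sub_apply, Pi.single_apply,
    smul_eq_mul]
  split_ifs <;> subst_vars <;> first | exact absurd rfl hab | nlinarith

end Uncross

lemma sq_sum_add_sq_sum_lt {ι α : Type*} [Fintype ι] [LinearOrder α] {r : α → ℝ}
    (hr : StrictMono r) {a b : ι → α} (hab : ¬a ≤ b) (hba : ¬b ≤ a) :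
    (∑ i, r (a i)) ^ 2 + (∑ i, r (b i)) ^ 2
      < (∑ i, r ((a ⊔ b) i)) ^ 2 + (∑ i, r ((a ⊓ b) i)) ^ 2 := by
  have hsum : ∑ i, r ((a ⊔ b) i) + ∑ i, r ((a ⊓ b) i) = ∑ i, r (a i) + ∑ i, r (b i) := by
    rw [← Finset.sum_add_distrib, ← Finset.sum_add_distrib]
    simp only [Pi.sup_apply, Pi.inf_apply, hr.monotone.map_max, hr.monotone.map_min, max_add_min]
  have hlt : ∀ {a b : ι → α}, ¬b ≤ a → ∑ i, r (a i) < ∑ i, r ((a ⊔ b) i) := fun {a b} h => by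
    obtain ⟨j, hj⟩ : ∃ j, a j < b j := by simpa [Pi.le_def] using h
    exact Finset.sum_lt_sum (fun i _ => hr.monotone le_sup_left)
      ⟨j, Finset.mem_univ j, by simpa [hj.le] using hr hj⟩
  have ha := hlt hba
  have hb : ∑ i, r (b i) < ∑ i, r ((a ⊔ b) i) := by rw [sup_comm]; exact hlt hab
  have hsq : ∀ M m s₁ s₂ : ℝ, M + m = s₁ + s₂ →
      M ^ 2 + m ^ 2 - s₁ ^ 2 - s₂ ^ 2 = 2 * ((M - s₁) * (M - s₂)) := fun M m s₁ s₂ h => by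
    rw [show m = s₁ + s₂ - M by linarith]; ring
  linarith [hsq _ _ _ _ hsum, mul_pos (sub_pos.2 ha) (sub_pos.2 hb)]

section Couplings

open Finset

variable {ι α : Type*} [Fintype ι] [DecidableEq ι] [LinearOrder α] [Fintype α]

def marginalCDF (w : (ι → α) → ℝ) (i : ι) (t : α) : ℝ :=
  ∑ u with u i ≤ t, w u

lemma marginalCDF_eq_dotProduct (w : (ι → α) → ℝ) (i : ι) (t : α) :
    marginalCDF w i t = w ⬝ᵥ fun u => if u i ≤ t then 1 else 0 := by
  simp [marginalCDF, dotProduct, sum_filter]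

lemma sum_filter_le_sum_filter_of_support {V : Type*} [Fintype V] {w : V → ℝ} (hw : 0 ≤ w)
    {p q : V → Prop} [DecidablePred p] [DecidablePred q] (h : ∀ u, w u ≠ 0 → p u → q u) :
    ∑ u with p u, w u ≤ ∑ u with q u, w u := by
  rw [sum_filter, sum_filter]
  refine sum_le_sum fun u _ => ?_
  by_cases hu : w u = 0
  · simp [hu]
  by_cases hp : p u
  · simp [hp, h u hu hp]
  · rw [if_neg hp]
    split_ifs
    exacts [hw u, le_rfl]

open scoped Classical in
theorem sum_le_eq_inf'_marginalCDF [Nonempty ι] {w : (ι → α) → ℝ} (hw : 0 ≤ w)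
    (hchain : IsChain (· ≤ ·) (support w)) (v : ι → α) :
    ∑ u with u ≤ v, w u = univ.inf' univ_nonempty fun i => marginalCDF w i (v i) := by
  obtain ⟨i₀, -, hi₀⟩ := univ.exists_min_image (fun i => marginalCDF w i (v i)) univ_nonempty
  refine le_antisymm (le_inf' _ _ fun i _ => sum_filter_le_sum_filter_of_support hw
    fun u _ hu => hu i) ((inf'_le _ (mem_univ i₀)).trans ?_)
  refine sum_filter_le_sum_filter_of_support hw fun u hu hui₀ => ?_
  by_contra hnot
  obtain ⟨j, hj⟩ : ∃ j, v j < u j := by simpa [Pi.le_def] using hnot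
  -- the support points below `v` in coordinate `j` lie strictly below `u`
  have hlt : marginalCDF w j (v j) < marginalCDF w i₀ (v i₀) := by
    simp only [marginalCDF, sum_filter]
    have hpos : 0 < w u := (hw u).lt_of_ne' hu
    refine sum_lt_sum (fun u' _ => ?_) ⟨u, mem_univ u, by simpa [hj.not_ge, hui₀] using hpos⟩
    by_cases hu' : w u' = 0
    · simp [hu']
    split_ifs with h₁ h₂
    · rfl
    · refine absurd ?_ h₂
      rcases hchain.total hu' hu with h | h
      · exact (h i₀).trans hui₀
      · exact absurd ((h j).trans h₁) hj.not_ge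
    · exact hw u'
    · rfl
  exact (hi₀ j (mem_univ j)).not_gt hlt

open scoped Classical in
theorem eq_of_forall_sum_le_eq {V : Type*} [PartialOrder V] [Fintype V] {w w' : V → ℝ}
    (h : ∀ v, ∑ u with u ≤ v, w u = ∑ u with u ≤ v, w' u) : w = w' := by
  funext v
  induction v using WellFoundedLT.induction with
  | _ v ih =>
    have hsplit : ∀ f : V → ℝ, ∑ u with u ≤ v, f u = f v + ∑ u with u < v, f u := fun f => by
      rw [show univ.filter (· ≤ v) = insert v (univ.filter (· < v)) by
        ext u; simp [le_iff_lt_or_eq, or_comm], sum_insert (by simp)]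
    have hv := h v
    rw [hsplit, hsplit, sum_congr rfl fun u hu => ih u (mem_filter.1 hu).2] at hv
    linarith

lemma marginalCDF_uncross (w : (ι → α) → ℝ) (a b : ι → α) :
    marginalCDF (uncross w a b) = marginalCDF w := by
  funext i t
  simp only [marginalCDF_eq_dotProduct, uncross_dotProduct, Pi.sup_apply, Pi.inf_apply]
  rcases le_total (a i) (b i) with h | h <;> simp [h]

/-- Uncrossing strictly increases the second moment of `∑ i, r (u i)` while keeping the marginals
and not increasing the expectation of a submodular function, so a maximiser of that moment is
supported on a chain. -/
theorem exists_isChain_support_dotProduct_le [Nonempty ι] {g : (ι → α) → ℝ}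
    (hg : IsSubmodular g) {w₀ : (ι → α) → ℝ} (hw₀ : 0 ≤ w₀) :
    ∃ w, 0 ≤ w ∧ marginalCDF w = marginalCDF w₀ ∧ IsChain (· ≤ ·) (support w) ∧
      w ⬝ᵥ g ≤ w₀ ⬝ᵥ g := by
  obtain ⟨i₀⟩ := ‹Nonempty ι›
  set r : α → ℝ := fun a => #{b | b < a}
  have hr : StrictMono r := fun a b hab => Nat.cast_lt.2 <| card_lt_card <|
    (ssubset_iff_of_subset fun c => by simpa using fun hc => hc.trans hab).2 ⟨a, by simp [hab]⟩
  set K := {w | 0 ≤ w ∧ marginalCDF w = marginalCDF w₀ ∧ w ⬝ᵥ g ≤ w₀ ⬝ᵥ g}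
  have hK : IsCompact K := by
    have hcont : Continuous fun w : (ι → α) → ℝ => marginalCDF w :=
      continuous_pi fun i => continuous_pi fun t => continuous_finsetSum _ fun u _ =>
        continuous_apply u
    refine (isCompact_Icc (a := 0) (b := fun u => marginalCDF w₀ i₀ (u i₀))).of_isClosed_subset
      ((isClosed_le continuous_const continuous_id).inter
        ((isClosed_eq hcont continuous_const).inter
          (isClosed_le (continuous_id.dotProduct continuous_const) continuous_const)))
      fun w hw => ⟨hw.1, fun u => ?_⟩
    rw [← hw.2.1]
    exact single_le_sum (fun u _ => hw.1 u) (mem_filter.2 ⟨mem_univ u, le_rfl⟩)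
  obtain ⟨w, hwK, hmax⟩ := hK.exists_isMaxOn ⟨w₀, hw₀, rfl, le_rfl⟩
    (continuous_id.dotProduct (continuous_const (y := fun v => (∑ i, r (v i)) ^ 2))).continuousOn
  refine ⟨w, hwK.1, hwK.2.1, fun a ha b hb hne => ?_, hwK.2.2⟩
  by_contra hinc
  push Not at hinc
  have hδ : 0 < min (w a) (w b) := lt_min ((hwK.1 a).lt_of_ne' ha) ((hwK.1 b).lt_of_ne' hb)
  have hmem : uncross w a b ∈ K := by
    refine ⟨uncross_nonneg hwK.1 hne, (marginalCDF_uncross w a b).trans hwK.2.1, ?_⟩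
    rw [uncross_dotProduct]
    nlinarith [hg a b, hwK.2.2]
  have hle := isMaxOn_iff.1 hmax _ hmem
  simp only [id, uncross_dotProduct] at hle
  nlinarith [sq_sum_add_sq_sum_lt hr hinc.1 hinc.2]

theorem dotProduct_le_of_isChain_support [Nonempty ι] {g : (ι → α) → ℝ} (hg : IsSubmodular g)
    {w w₀ : (ι → α) → ℝ} (hw : 0 ≤ w) (hw₀ : 0 ≤ w₀) (hchain : IsChain (· ≤ ·) (support w))
    (hmarg : marginalCDF w = marginalCDF w₀) : w ⬝ᵥ g ≤ w₀ ⬝ᵥ g := by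
  obtain ⟨w', hw', hmarg', hchain', hle⟩ := exists_isChain_support_dotProduct_le hg hw₀
  have hww' : w = w' := eq_of_forall_sum_le_eq fun v => by
    rw [sum_le_eq_inf'_marginalCDF hw hchain, sum_le_eq_inf'_marginalCDF hw' hchain', hmarg,
      hmarg']
  exact hww' ▸ hle

end Couplings

section RandomVectors

open Finset Filter Topology ProbabilityTheory

variable {Ω : Type*} [MeasurableSpace Ω] {μ : Measure Ω}

def IsComonotone {E : Type*} [Preorder E] (μ : Measure Ω) (Z : Ω → E) : Prop :=
  ∃ s ∈ ae μ, IsChain (· ≤ ·) (Z '' s)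

lemma IsComonotone.comp_monotone {E F : Type*} [Preorder E] [Preorder F] {Z : Ω → E}
    (hZ : IsComonotone μ Z) {f : E → F} (hf : Monotone f) : IsComonotone μ (f ∘ Z) := by
  obtain ⟨s, hs, hchain⟩ := hZ
  exact ⟨s, hs, Set.image_comp f Z s ▸ hf.isChain_image hchain⟩

lemma IsComonotone.isChain_support {β : Type*} [Preorder β] {W : Ω → β} (hW : IsComonotone μ W) :
    IsChain (· ≤ ·) (support fun v => μ.real (W ⁻¹' {v})) := by
  obtain ⟨s, hs, hchain⟩ := hW
  refine hchain.mono fun v hv => ?_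
  have hpos : μ (W ⁻¹' {v} ∩ s) ≠ 0 := by
    rw [measure_inter_conull (mem_ae_iff.1 hs)]
    exact fun h => hv (by simp [measureReal_def, h])
  obtain ⟨ω, hωv, hωs⟩ := nonempty_of_measure_ne_zero hpos
  exact ⟨ω, hωs, hωv⟩

lemma integral_comp_eq_dotProduct [IsFiniteMeasure μ] {β : Type*} [Fintype β]
    [MeasurableSpace β] [MeasurableSingletonClass β] {W : Ω → β} (hW : Measurable W)
    (h : β → ℝ) : ∫ ω, h (W ω) ∂μ = (fun v => μ.real (W ⁻¹' {v})) ⬝ᵥ h := by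
  rw [← integral_map hW.aemeasurable Measurable.of_discrete.aestronglyMeasurable,
    integral_fintype .of_finite]
  simp [dotProduct, map_measureReal_apply hW (measurableSet_singleton _)]

section Discrete

variable {ι α : Type*} [Fintype ι] [DecidableEq ι] [LinearOrder α] [Fintype α]
  [MeasurableSpace α] [MeasurableSingletonClass α]

lemma marginalCDF_measureReal_preimage [IsFiniteMeasure μ] {W : Ω → ι → α} (hW : Measurable W)
    (i : ι) (t : α) :
    marginalCDF (fun v => μ.real (W ⁻¹' {v})) i t = μ.real {ω | W ω i ≤ t} := by
  have h := sum_measureReal_singleton (μ := μ.map W) (univ.filter fun u : ι → α => u i ≤ t)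
  simp only [map_measureReal_apply hW (measurableSet_singleton _),
    map_measureReal_apply hW MeasurableSet.of_discrete] at h
  rw [marginalCDF, h]
  congr 1
  ext ω
  simp

theorem integral_comp_le_of_isComonotone_of_fintype [IsFiniteMeasure μ] [Nonempty ι]
    {g : (ι → α) → ℝ} (hg : IsSubmodular g) {A B : Ω → ι → α} (hA : Measurable A)
    (hB : Measurable B) (hmarg : ∀ i t, μ.real {ω | B ω i ≤ t} = μ.real {ω | A ω i ≤ t})
    (hBc : IsComonotone μ B) : ∫ ω, g (B ω) ∂μ ≤ ∫ ω, g (A ω) ∂μ := by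
  rw [integral_comp_eq_dotProduct hB, integral_comp_eq_dotProduct hA]
  refine dotProduct_le_of_isChain_support hg (fun _ => measureReal_nonneg)
    (fun _ => measureReal_nonneg) hBc.isChain_support (funext₂ fun i t => ?_)
  rw [marginalCDF_measureReal_preimage hB, marginalCDF_measureReal_preimage hA, hmarg]

end Discrete

/-- The numerator of `t` rounded down to the grid `ℕ / m` and capped at `m`. -/
def gridIndex (m : ℕ) (t : ℝ) : Fin (m ^ 2 + 1) :=
  ⟨min ⌊m * t⌋₊ (m ^ 2), Nat.lt_succ_of_le (min_le_right _ _)⟩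

lemma monotone_gridIndex (m : ℕ) : Monotone (gridIndex m) := fun _ _ h =>
  Fin.mk_le_mk.2 <| min_le_min_right _ <| Nat.floor_mono <|
    mul_le_mul_of_nonneg_left h (Nat.cast_nonneg m)

lemma tendsto_gridIndex {t : ℝ} (ht : 0 ≤ t) :
    Tendsto (fun m : ℕ => ((gridIndex m t : ℕ) : ℝ) / m) atTop (𝓝 t) := by
  have hlow : Tendsto (fun m : ℕ => t - 1 / (m : ℝ)) atTop (𝓝 t) := by
    simpa using (tendsto_const_nhds (x := t)).sub tendsto_one_div_atTop_nhds_zero_nat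
  have hidx : ∀ᶠ m : ℕ in atTop, 0 < (m : ℝ) ∧ ((gridIndex m t : ℕ) : ℝ) = ⌊m * t⌋₊ := by
    filter_upwards [eventually_ge_atTop (⌈t⌉₊ + 1)] with m hm
    have hm' : t ≤ m := (Nat.le_ceil t).trans (by exact_mod_cast (Nat.le_succ _).trans hm)
    refine ⟨by exact_mod_cast (Nat.succ_pos _).trans_le hm, ?_⟩
    show ((min ⌊m * t⌋₊ (m ^ 2) : ℕ) : ℝ) = _
    rw [min_eq_left (Nat.floor_le_of_le (by push_cast; nlinarith))]
  refine tendsto_of_tendsto_of_tendsto_of_le_of_le' hlow tendsto_const_nhds ?_ ?_ <;>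
    filter_upwards [hidx] with m ⟨hm, hm'⟩ <;> rw [hm']
  · rw [le_div_iff₀ hm, sub_mul, one_div_mul_cancel hm.ne', mul_comm]
    linarith [Nat.lt_floor_add_one (m * t)]
  · rw [div_le_iff₀ hm, mul_comm]
    exact Nat.floor_le (by positivity)

theorem integral_comp_le_of_isComonotone [IsFiniteMeasure μ] {ι : Type*} [Fintype ι]
    [DecidableEq ι] [Nonempty ι] {g : (ι → ℝ) → ℝ} (hg : Continuous g) (hsub : IsSubmodular g)
    {C : ℝ} (hC : ∀ x, 0 ≤ x → |g x| ≤ C) {X Z : Ω → ι → ℝ} (hX : Measurable X)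
    (hZ : Measurable Z) (hX0 : ∀ ω, 0 ≤ X ω) (hZ0 : ∀ ω, 0 ≤ Z ω)
    (hXZ : ∀ i, IdentDistrib (fun ω => X ω i) (fun ω => Z ω i) μ μ) (hZc : IsComonotone μ Z) :
    ∫ ω, g (Z ω) ∂μ ≤ ∫ ω, g (X ω) ∂μ := by
  set e : ℕ → (ι → ℝ) → ι → ℝ := fun m x i => ((gridIndex m (x i) : ℕ) : ℝ) / m
  have he : ∀ m, Monotone fun k : Fin (m ^ 2 + 1) => ((k : ℕ) : ℝ) / m := fun m _ _ h =>
    div_le_div_of_nonneg_right (Nat.cast_le.2 h) (Nat.cast_nonneg m)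
  have hq : ∀ m, Measurable (gridIndex m) := fun m => (monotone_gridIndex m).measurable
  have hqY : ∀ m {Y : Ω → ι → ℝ}, Measurable Y → Measurable fun ω i => gridIndex m (Y ω i) :=
    fun m Y hY => measurable_pi_lambda _ fun i => (hq m).comp ((measurable_pi_apply i).comp hY)
  have hlim : ∀ Y : Ω → ι → ℝ, Measurable Y → (∀ ω, 0 ≤ Y ω) →
      Tendsto (fun m => ∫ ω, g (e m (Y ω)) ∂μ) atTop (𝓝 (∫ ω, g (Y ω) ∂μ)) := by
    intro Y hY hY0
    have heY : ∀ m, Measurable fun ω => e m (Y ω) := fun m => measurable_pi_lambda _ fun i =>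
      (Measurable.of_discrete (f := fun k : Fin (m ^ 2 + 1) => ((k : ℕ) : ℝ) / m)).comp
        ((measurable_pi_apply i).comp (hqY m hY))
    refine tendsto_integral_of_dominated_convergence (fun _ => C)
      (fun m => (hg.measurable.comp (heY m)).aestronglyMeasurable)
      (integrable_const C) (fun m => ae_of_all _ fun ω => ?_)
      (ae_of_all _ fun ω => (hg.tendsto _).comp (tendsto_pi_nhds.2 fun i =>
        tendsto_gridIndex (hY0 ω i)))
    exact (Real.norm_eq_abs _).trans_le (hC _ fun i => by positivity)
  refine le_of_tendsto_of_tendsto' (hlim Z hZ hZ0) (hlim X hX hX0) fun m =>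
    integral_comp_le_of_isComonotone_of_fintype (hsub.comp_monotone (he m)) (hqY m hX) (hqY m hZ)
      (fun i t => ?_) (hZc.comp_monotone (f := fun x i => gridIndex m (x i))
        fun _ _ h i => monotone_gridIndex m (h i))
  exact congrArg ENNReal.toReal (((hXZ i).comp (hq m)).measure_mem_eq measurableSet_Iic).symm

end RandomVectors

section Quantile

open ProbabilityTheory Filter Topology Set

/-- It is `0` where the defining set is empty, which happens only for `u ≥ 1`. -/
def quantile (ν : Measure ℝ) (u : ℝ) : ℝ :=
  sInf {t | 0 ≤ t ∧ u ≤ cdf ν t}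

variable {ν : Measure ℝ}

lemma quantile_nonneg (u : ℝ) : 0 ≤ quantile ν u :=
  Real.sInf_nonneg fun _ ht => ht.1

lemma nonempty_setOf_le_cdf {u : ℝ} (hu : u < 1) : {t | 0 ≤ t ∧ u ≤ cdf ν t}.Nonempty := by
  obtain ⟨t, ht, ht0⟩ :=
    (((tendsto_cdf_atTop ν).eventually (eventually_gt_nhds hu)).and (eventually_ge_atTop 0)).exists
  exact ⟨t, ht0, ht.le⟩

lemma quantile_le_iff {u a : ℝ} (hne : {t | 0 ≤ t ∧ u ≤ cdf ν t}.Nonempty) (ha : 0 ≤ a) :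
    quantile ν u ≤ a ↔ u ≤ cdf ν a := by
  refine ⟨fun h => ?_, fun h => csInf_le ⟨0, fun _ ht => ht.1⟩ ⟨ha, h⟩⟩
  refine ge_of_tendsto (((cdf ν).right_continuous a).mono_left
    (nhdsWithin_mono a Ioi_subset_Ici_self)) ?_
  filter_upwards [self_mem_nhdsWithin] with t (ht : a < t)
  obtain ⟨s, hs, hst⟩ := exists_lt_of_csInf_lt hne (h.trans_lt ht)
  exact hs.2.trans (monotone_cdf ν hst.le)

lemma quantile_le_iff_of_mem_Ioo [IsProbabilityMeasure ν] (hν : ν (Iio 0) = 0) {u : ℝ}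
    (hu : u ∈ Ioo 0 1) (a : ℝ) :
    quantile ν u ≤ a ↔ u ≤ cdf ν a := by
  rcases le_or_gt 0 a with ha | ha
  · exact quantile_le_iff (nonempty_setOf_le_cdf hu.2) ha
  · have hF : cdf ν a = 0 := by
      rw [cdf_eq_real, measureReal_def, measure_mono_null (Iic_subset_Iio.2 ha) hν,
        ENNReal.toReal_zero]
    exact iff_of_false (ha.trans_le (quantile_nonneg u)).not_ge (hF ▸ hu.1.not_ge)

lemma monotoneOn_quantile : MonotoneOn (quantile ν) (Iio 1) := fun _ _ _ hv huv =>
  csInf_le_csInf ⟨0, fun _ ht => ht.1⟩ (nonempty_setOf_le_cdf hv)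
    fun _ ht => ⟨ht.1, huv.trans ht.2⟩

lemma measurable_quantile : Measurable (quantile ν) := by
  refine measurable_of_Iic fun a => ?_
  rcases lt_or_ge a 0 with ha | ha
  · convert MeasurableSet.empty
    ext u
    simpa using ha.trans_le (quantile_nonneg u)
  have hempty : IsUpperSet {u | ¬{t | 0 ≤ t ∧ u ≤ cdf ν t}.Nonempty} :=
    fun u v huv hu hne => hu (hne.mono fun t ht => ⟨ht.1, huv.trans ht.2⟩)
  have hpre : quantile ν ⁻¹' Iic a
      = Iic (cdf ν a) ∪ {u | ¬{t | 0 ≤ t ∧ u ≤ cdf ν t}.Nonempty} := by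
    ext u
    by_cases hne : {t | 0 ≤ t ∧ u ≤ cdf ν t}.Nonempty
    · simp [hne, quantile_le_iff hne ha]
    · have hq : quantile ν u = 0 := by
        rw [quantile, not_nonempty_iff_eq_empty.1 hne, Real.sInf_empty]
      simp [hne, hq, ha]
  rw [hpre]
  exact measurableSet_Iic.union hempty.ordConnected.measurableSet

theorem map_quantile_volume_Icc [IsProbabilityMeasure ν] (hν : ν (Iio 0) = 0) :
    (volume.restrict (Icc (0 : ℝ) 1)).map (quantile ν) = ν := by
  have hF1 := cdf_le_one ν
  refine (Measure.ext_of_Iic ν _ fun a => ?_).symm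
  rw [Measure.map_apply measurable_quantile measurableSet_Iic,
    Measure.restrict_apply (measurable_quantile measurableSet_Iic)]
  have hae : (quantile ν ⁻¹' Iic a ∩ Icc 0 1 : Set ℝ) =ᵐ[volume] Ioc 0 (cdf ν a) := by
    refine eventuallyEq_set.2 ?_
    filter_upwards [Measure.ae_ne volume 0, Measure.ae_ne volume 1] with u hu0 hu1
    rcases lt_trichotomy u 0 with hu | hu | hu
    · simp [hu.not_ge, hu.le.not_gt]
    · exact absurd hu hu0
    rcases lt_or_gt_of_ne hu1 with hu' | hu'
    · simp [quantile_le_iff_of_mem_Ioo hν ⟨hu, hu'⟩, hu, hu.le, hu'.le]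
    · simp [hu'.not_ge, (hF1 a).trans_lt hu']
  rw [measure_congr hae, Real.volume_Ioc, sub_zero, ofReal_cdf]

end Quantile

section QuantileCoupling

open ProbabilityTheory Set

variable {Ω : Type*} [MeasurableSpace Ω] {μ : Measure Ω} {U : Ω → ℝ}

lemma isComonotone_quantile {ι : Type*} (hU : Measurable U)
    (hUlaw : μ.map U = volume.restrict (Icc 0 1)) (ν : ι → Measure ℝ) :
    IsComonotone μ fun ω i => quantile (ν i) (U ω) := by
  have hlt : ∀ᵐ u ∂(μ.map U), u < 1 := by
    rw [hUlaw, ae_restrict_iff' measurableSet_Icc]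
    filter_upwards [Measure.ae_ne volume 1] with u hu1 hu using lt_of_le_of_ne hu.2 hu1
  refine ⟨{ω | U ω < 1}, ae_of_ae_map hU.aemeasurable hlt, ?_⟩
  rintro _ ⟨ω, hω, rfl⟩ _ ⟨ω', hω', rfl⟩ -
  rcases le_total (U ω) (U ω') with h | h
  · exact Or.inl fun i => monotoneOn_quantile hω hω' h
  · exact Or.inr fun i => monotoneOn_quantile hω' hω h

lemma cdf_map_apply [IsProbabilityMeasure μ] {Y : Ω → ℝ} (hY : Measurable Y) (t : ℝ) :
    cdf (μ.map Y) t = (μ {ω | Y ω ≤ t}).toReal := by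
  have := Measure.isProbabilityMeasure_map (μ := μ) hY.aemeasurable
  rw [cdf_eq_real, map_measureReal_apply hY measurableSet_Iic]
  rfl

lemma identDistrib_quantile [IsProbabilityMeasure μ] {Y : Ω → ℝ} (hY : Measurable Y)
    (hY0 : ∀ ω, 0 ≤ Y ω) (hU : Measurable U) (hUlaw : μ.map U = volume.restrict (Icc 0 1)) :
    IdentDistrib Y (fun ω => quantile (μ.map Y) (U ω)) μ μ := by
  have := Measure.isProbabilityMeasure_map (μ := μ) hY.aemeasurable
  have hν : μ.map Y (Iio 0) = 0 := by
    rw [Measure.map_apply hY measurableSet_Iio]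
    convert measure_empty (μ := μ)
    ext ω
    simpa using hY0 ω
  refine ⟨hY.aemeasurable, (measurable_quantile.comp hU).aemeasurable, ?_⟩
  change _ = μ.map (quantile (μ.map Y) ∘ U)
  rw [← Measure.map_map measurable_quantile hU, hUlaw, map_quantile_volume_Icc hν]

end QuantileCoupling

section Clearing

open Finset Filter Topology

variable {ι : Type*} [Fintype ι]

def clearingMap (π : ι → ι → ℝ) (pb x p : ι → ℝ) : ι → ℝ :=
  fun i => min (pb i) (x i + ∑ j, π j i * p j)

/-- The total payment to the societal node, whose relative liability from `j` is
`1 - ∑ i, π j i`. -/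
def paymentToSociety (π : ι → ι → ℝ) (p : ι → ℝ) : ℝ :=
  ∑ j, (1 - ∑ i, π j i) * p j

variable {π : ι → ι → ℝ} {pb : ι → ℝ}

lemma clearingMap_mono (hπ : ∀ j i, 0 ≤ π j i) {x x' p p' : ι → ℝ} (hx : x ≤ x') (hp : p ≤ p') :
    clearingMap π pb x p ≤ clearingMap π pb x' p' := fun i =>
  min_le_min_left _ <| add_le_add (hx i) <| sum_le_sum fun j _ =>
    mul_le_mul_of_nonneg_left (hp j) (hπ j i)

lemma clearingMap_nonneg (hπ : ∀ j i, 0 ≤ π j i) (hpb : 0 ≤ pb) {x p : ι → ℝ} (hx : 0 ≤ x)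
    (hp : 0 ≤ p) : 0 ≤ clearingMap π pb x p := fun i =>
  le_min (hpb i) <| add_nonneg (hx i) <| sum_nonneg fun j _ => mul_nonneg (hπ j i) (hp j)

lemma clearingMap_le (x p : ι → ℝ) : clearingMap π pb x p ≤ pb := fun _ => min_le_left _ _

lemma sum_abs_clearingMap_sub_le (hπ : ∀ j i, 0 ≤ π j i) {κ : ℝ} (hκ : ∀ j, ∑ i, π j i ≤ κ)
    (x p q : ι → ℝ) :
    ∑ i, |clearingMap π pb x p i - clearingMap π pb x q i| ≤ κ * ∑ j, |p j - q j| :=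
  calc ∑ i, |clearingMap π pb x p i - clearingMap π pb x q i|
      ≤ ∑ i, ∑ j, π j i * |p j - q j| := sum_le_sum fun i _ => by
        refine (abs_min_sub_min_le_max _ _ _ _).trans ?_
        rw [sub_self, abs_zero, max_eq_right (abs_nonneg _), add_sub_add_left_eq_sub,
          ← sum_sub_distrib]
        refine (abs_sum_le_sum_abs _ _).trans (le_of_eq (sum_congr rfl fun j _ => ?_))
        rw [← mul_sub, abs_mul, abs_of_nonneg (hπ j i)]
    _ = ∑ j, (∑ i, π j i) * |p j - q j| := by
        rw [sum_comm]
        simp only [sum_mul]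
    _ ≤ κ * ∑ j, |p j - q j| := by
        rw [mul_sum]
        exact sum_le_sum fun j _ => mul_le_mul_of_nonneg_right (hκ j) (abs_nonneg _)

lemma tendsto_iterate_clearingMap (hπ : ∀ j i, 0 ≤ π j i) (hrs : ∀ j, ∑ i, π j i < 1)
    {x p : ι → ℝ} (hp : IsFixedPt (clearingMap π pb x) p) (p₀ : ι → ℝ) :
    Tendsto (fun k => (clearingMap π pb x)^[k] p₀) atTop (𝓝 p) := by
  obtain ⟨κ, hκ0, hκ1, hκ⟩ : ∃ κ : ℝ, 0 ≤ κ ∧ κ < 1 ∧ ∀ j, ∑ i, π j i ≤ κ :=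
    ⟨(univ.sup fun j => (∑ i, π j i).toNNReal : NNReal), NNReal.coe_nonneg _,
      NNReal.coe_lt_one.2 <| (Finset.sup_lt_iff zero_lt_one).2 fun j _ =>
        Real.toNNReal_lt_one.2 (hrs j),
      fun j => (Real.le_coe_toNNReal _).trans (NNReal.coe_le_coe.2
        (le_sup (f := fun j => (∑ i, π j i).toNNReal) (mem_univ j)))⟩
  have hrate : ∀ k, ∑ i, |(clearingMap π pb x)^[k] p₀ i - p i| ≤ κ ^ k * ∑ i, |p₀ i - p i| := by
    intro k
    induction k with
    | zero => simp
    | succ k ih =>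
      rw [iterate_succ_apply', pow_succ', mul_assoc]
      conv_lhs => rw [← hp.eq]
      exact (sum_abs_clearingMap_sub_le hπ hκ x _ _).trans (mul_le_mul_of_nonneg_left ih hκ0)
  have hgeom : Tendsto (fun k => κ ^ k * ∑ i, |p₀ i - p i|) atTop (𝓝 0) := by
    simpa using (tendsto_pow_atTop_nhds_zero_of_lt_one hκ0 hκ1).mul_const (∑ i, |p₀ i - p i|)
  refine tendsto_pi_nhds.2 fun i => tendsto_iff_dist_tendsto_zero.2 <|
    squeeze_zero (fun _ => dist_nonneg) (fun k => ?_) hgeom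
  rw [Real.dist_eq]
  exact (single_le_sum (f := fun i => |(clearingMap π pb x)^[k] p₀ i - p i|)
    (fun i _ => abs_nonneg _) (mem_univ i)).trans (hrate k)

lemma continuous_iterate_clearingMap (k : ℕ) (p₀ : ι → ℝ) :
    Continuous fun x => (clearingMap π pb x)^[k] p₀ := by
  induction k with
  | zero => exact continuous_const
  | succ k ih =>
    simp only [iterate_succ_apply']
    exact continuous_pi fun i => continuous_const.min <| (continuous_apply i).add <|
      continuous_finsetSum _ fun j _ => continuous_const.mul ((continuous_apply j).comp ih)

lemma monotone_iterate_clearingMap (hπ : ∀ j i, 0 ≤ π j i) (k : ℕ) (p₀ : ι → ℝ) :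
    Monotone fun x => (clearingMap π pb x)^[k] p₀ := by
  induction k with
  | zero => exact monotone_const
  | succ k ih =>
    intro x y h
    simp only [iterate_succ_apply']
    exact clearingMap_mono hπ h (ih h)

lemma isSubmodular_iterate_clearingMap (hπ : ∀ j i, 0 ≤ π j i) (k : ℕ) (p₀ : ι → ℝ) (i : ι) :
    IsSubmodular fun x => (clearingMap π pb x)^[k] p₀ i := by
  induction k generalizing i with
  | zero => exact fun _ _ => le_rfl
  | succ k ih =>
    simp only [iterate_succ_apply']
    refine IsSubmodular.min_const ((isSubmodular_apply i).add
      (IsSubmodular.sum_mul (fun j => hπ j i) ih)) (fun x y h => ?_) (pb i)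
    exact add_le_add (h i) <| sum_le_sum fun j _ =>
      mul_le_mul_of_nonneg_left (monotone_iterate_clearingMap hπ k p₀ h j) (hπ j i)

lemma iterate_clearingMap_nonneg (hπ : ∀ j i, 0 ≤ π j i) (hpb : 0 ≤ pb) {x : ι → ℝ} (hx : 0 ≤ x)
    (k : ℕ) : 0 ≤ (clearingMap π pb x)^[k] pb := by
  induction k with
  | zero => exact hpb
  | succ k ih =>
    rw [iterate_succ_apply']
    exact clearingMap_nonneg hπ hpb hx ih

lemma iterate_clearingMap_le (x : ι → ℝ) : ∀ k, (clearingMap π pb x)^[k] pb ≤ pb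
  | 0 => le_rfl
  | k + 1 => by
    rw [iterate_succ_apply']
    exact clearingMap_le x _

lemma continuous_paymentToSociety : Continuous (paymentToSociety π) :=
  continuous_finsetSum _ fun j _ => continuous_const.mul (continuous_apply j)

lemma abs_paymentToSociety_le (hπ : ∀ j i, 0 ≤ π j i) (hrs : ∀ j, ∑ i, π j i ≤ 1) {p : ι → ℝ}
    (hp0 : 0 ≤ p) (hp : p ≤ pb) : |paymentToSociety π p| ≤ ∑ j, pb j := by
  have h1 : ∀ j, 0 ≤ 1 - ∑ i, π j i := fun j => sub_nonneg.2 (hrs j)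
  have h2 : ∀ j, 1 - ∑ i, π j i ≤ 1 := fun j => sub_le_self _ (sum_nonneg fun i _ => hπ j i)
  rw [paymentToSociety, abs_of_nonneg (sum_nonneg fun j _ => mul_nonneg (h1 j) (hp0 j))]
  exact sum_le_sum fun j _ => (mul_le_of_le_one_left (hp0 j) (h2 j)).trans (hp j)

lemma max_sub_pbar_eq {x p : ι → ℝ} (hp : IsFixedPt (clearingMap π pb x) p) (i : ι) :
    max (x i + ∑ j, π j i * p j - pb i) 0 = x i + ∑ j, π j i * p j - p i := by
  rw [← congrFun hp.eq i, clearingMap]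
  rcases le_total (pb i) (x i + ∑ j, π j i * p j) with h | h <;> simp [h]

end Clearing

section ClearingIntegrals

open Finset Filter Topology ProbabilityTheory

variable {Ω ι : Type*} [MeasurableSpace Ω] {μ : Measure Ω} [Fintype ι] {π : ι → ι → ℝ}
  {pb : ι → ℝ} {P : (ι → ℝ) → ι → ℝ}

lemma sum_max_sub_pbar_eq {x p : ι → ℝ} (hp : IsFixedPt (clearingMap π pb x) p) :
    ∑ i, max (x i + ∑ j, π j i * p j - pb i) 0 = ∑ i, x i - paymentToSociety π p := by
  simp only [max_sub_pbar_eq hp, paymentToSociety, sum_sub_distrib, sum_add_distrib, sub_mul,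
    one_mul, sum_mul]
  rw [sum_comm]
  ring

lemma measurable_comp_of_isFixedPt (hπ : ∀ j i, 0 ≤ π j i) (hrs : ∀ j, ∑ i, π j i < 1)
    (hP : ∀ x, 0 ≤ x → IsFixedPt (clearingMap π pb x) (P x)) {Y : Ω → ι → ℝ} (hY : Measurable Y)
    (hY0 : ∀ ω, 0 ≤ Y ω) : Measurable fun ω => P (Y ω) :=
  measurable_of_tendsto_metrizable
    (fun k => (continuous_iterate_clearingMap k pb).measurable.comp hY)
    (tendsto_pi_nhds.2 fun ω => tendsto_iterate_clearingMap hπ hrs (hP _ (hY0 ω)) pb)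

lemma nonneg_of_isFixedPt (hπ : ∀ j i, 0 ≤ π j i) (hrs : ∀ j, ∑ i, π j i < 1) (hpb : 0 ≤ pb)
    {x p : ι → ℝ} (hx : 0 ≤ x) (hp : IsFixedPt (clearingMap π pb x) p) : 0 ≤ p :=
  ge_of_tendsto' (tendsto_iterate_clearingMap hπ hrs hp pb) (iterate_clearingMap_nonneg hπ hpb hx)

lemma integral_sum_max_sub_pbar_eq [IsFiniteMeasure μ] (hπ : ∀ j i, 0 ≤ π j i)
    (hrs : ∀ j, ∑ i, π j i < 1) (hpb : 0 ≤ pb)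
    (hP : ∀ x, 0 ≤ x → IsFixedPt (clearingMap π pb x) (P x)) {Y : Ω → ι → ℝ} (hY : Measurable Y)
    (hY0 : ∀ ω, 0 ≤ Y ω) (hYint : ∀ i, Integrable (fun ω => Y ω i) μ) :
    ∑ i, ∫ ω, max (Y ω i + ∑ j, π j i * P (Y ω) j - pb i) 0 ∂μ
      = ∑ i, ∫ ω, Y ω i ∂μ - ∫ ω, paymentToSociety π (P (Y ω)) ∂μ := by
  have hPm := measurable_comp_of_isFixedPt hπ hrs hP hY hY0
  have hPint : ∀ j, Integrable (fun ω => P (Y ω) j) μ := fun j =>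
    .of_bound ((measurable_pi_apply j).comp hPm).aestronglyMeasurable (pb j) <|
      ae_of_all _ fun ω => by
        rw [Real.norm_eq_abs,
          abs_of_nonneg (nonneg_of_isFixedPt hπ hrs hpb (hY0 ω) (hP _ (hY0 ω)) j)]
        exact (hP _ (hY0 ω)).eq ▸ clearingMap_le _ _ j
  have hmax : ∀ i, Integrable (fun ω => max (Y ω i + ∑ j, π j i * P (Y ω) j - pb i) 0) μ :=
    fun i => (((hYint i).add (integrable_finsetSum _ fun j _ => (hPint j).const_mul _)).sub
      (hPint i)).congr (ae_of_all _ fun ω => (max_sub_pbar_eq (hP _ (hY0 ω)) i).symm)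
  have hpay : Integrable (fun ω => paymentToSociety π (P (Y ω))) μ :=
    integrable_finsetSum _ fun j _ => (hPint j).const_mul _
  rw [← integral_finsetSum _ fun i _ => hmax i, ← integral_finsetSum _ fun i _ => hYint i,
    ← integral_sub (integrable_finsetSum _ fun i _ => hYint i) hpay]
  exact integral_congr_ae (ae_of_all _ fun ω => sum_max_sub_pbar_eq (hP _ (hY0 ω)))

theorem integral_paymentToSociety_le [IsFiniteMeasure μ] [DecidableEq ι] [Nonempty ι]
    (hπ : ∀ j i, 0 ≤ π j i) (hrs : ∀ j, ∑ i, π j i < 1) (hpb : 0 ≤ pb)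
    (hP : ∀ x, 0 ≤ x → IsFixedPt (clearingMap π pb x) (P x)) {X Z : Ω → ι → ℝ} (hX : Measurable X)
    (hZ : Measurable Z) (hX0 : ∀ ω, 0 ≤ X ω) (hZ0 : ∀ ω, 0 ≤ Z ω)
    (hXZ : ∀ i, IdentDistrib (fun ω => X ω i) (fun ω => Z ω i) μ μ) (hZc : IsComonotone μ Z) :
    ∫ ω, paymentToSociety π (P (Z ω)) ∂μ ≤ ∫ ω, paymentToSociety π (P (X ω)) ∂μ := by
  set g : ℕ → (ι → ℝ) → ℝ := fun k x => paymentToSociety π ((clearingMap π pb x)^[k] pb)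
  have hcont : ∀ k, Continuous (g k) := fun k =>
    continuous_paymentToSociety.comp (continuous_iterate_clearingMap k pb)
  have hbound : ∀ k x, 0 ≤ x → |g k x| ≤ ∑ j, pb j := fun k x hx =>
    abs_paymentToSociety_le hπ (fun j => (hrs j).le) (iterate_clearingMap_nonneg hπ hpb hx k)
      (iterate_clearingMap_le x k)
  have hlim : ∀ Y : Ω → ι → ℝ, Measurable Y → (∀ ω, 0 ≤ Y ω) → Tendsto
      (fun k => ∫ ω, g k (Y ω) ∂μ) atTop (𝓝 (∫ ω, paymentToSociety π (P (Y ω)) ∂μ)) :=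
    fun Y hY hY0 => tendsto_integral_of_dominated_convergence (fun _ => ∑ j, pb j)
      (fun k => ((hcont k).measurable.comp hY).aestronglyMeasurable) (integrable_const _)
      (fun k => ae_of_all _ fun ω => (Real.norm_eq_abs _).trans_le (hbound k _ (hY0 ω)))
      (ae_of_all _ fun ω => (continuous_paymentToSociety.tendsto _).comp
        (tendsto_iterate_clearingMap hπ hrs (hP _ (hY0 ω)) pb))
  refine le_of_tendsto_of_tendsto' (hlim Z hZ hZ0) (hlim X hX hX0) fun k =>
    integral_comp_le_of_isComonotone (hcont k) ?_ (hbound k) hX hZ hX0 hZ0 hXZ hZc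
  exact IsSubmodular.sum_mul (fun j => sub_nonneg.2 (hrs j).le)
    (isSubmodular_iterate_clearingMap hπ k pb)

end ClearingIntegrals

lemma relLiab_nonneg {n : ℕ} {L : Matrix (Fin n) (Fin (n + 1)) ℝ} (hL : ∀ i j, 0 ≤ L i j)
    (i j : Fin n) : 0 ≤ relLiab L i j := by
  unfold relLiab
  split_ifs with h
  exacts [div_nonneg (hL _ _) h.le, le_rfl]

theorem comonotonic_maximizes_total_equity_general (n : ℕ) (hn : 1 ≤ n)
    (L : Matrix (Fin n) (Fin (n + 1)) ℝ)
    (hL : ∀ i j, 0 ≤ L i j)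
    (hreg : ∀ i, 0 < pbar L i ∧ ∑ j, relLiab L i j < 1)
    (P : (Fin n → ℝ) → (Fin n → ℝ))
    (hP : ∀ x : Fin n → ℝ, (∀ i, 0 ≤ x i) → IsGreatestClearingPayment L x (P x))
    (Ω : Type) (mΩ : MeasurableSpace Ω) (ℙ : Measure Ω) (hprob : IsProbabilityMeasure ℙ)
    (X : Ω → Fin n → ℝ) (hXm : Measurable X) (hXpos : ∀ ω i, 0 ≤ X ω i)
    (hXint : ∀ i, Integrable (fun ω => X ω i) ℙ)
    (U : Ω → ℝ) (hUm : Measurable U)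
    (hU : ℙ.map U = volume.restrict (Set.Icc (0 : ℝ) 1))
    (Z : Ω → Fin n → ℝ)
    (hZ : ∀ ω i, Z ω i = sInf {t : ℝ | 0 ≤ t ∧ U ω ≤ (ℙ {ω' | X ω' i ≤ t}).toReal}) :
    ∑ i, ∫ ω, max (X ω i + (∑ j, relLiab L j i * P (X ω) j) - pbar L i) 0 ∂ℙ
      ≤ ∑ i, ∫ ω, max (Z ω i + (∑ j, relLiab L j i * P (Z ω) j) - pbar L i) 0 ∂ℙ := by
  have : Nonempty (Fin n) := ⟨⟨0, hn⟩⟩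
  have hπ : ∀ j i, 0 ≤ relLiab L j i := relLiab_nonneg hL
  have hrs : ∀ j, ∑ i, relLiab L j i < 1 := fun j => (hreg j).2
  have hpb : 0 ≤ pbar L := fun i => (hreg i).1.le
  have hfix : ∀ x, 0 ≤ x → IsFixedPt (clearingMap (relLiab L) (pbar L) x) (P x) :=
    fun x hx => funext fun i => ((hP x hx).1.2 i).symm
  have hXi : ∀ i, Measurable fun ω => X ω i := fun i => (measurable_pi_apply i).comp hXm
  have hZq : Z = fun ω i => quantile (ℙ.map fun ω => X ω i) (U ω) := by
    funext ω i
    simp only [hZ, quantile, cdf_map_apply (hXi i)]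
  have hZm : Measurable Z := hZq ▸ measurable_pi_lambda _ fun i => measurable_quantile.comp hUm
  have hZ0 : ∀ ω, 0 ≤ Z ω := hZq ▸ fun ω i => quantile_nonneg _
  have hXZ : ∀ i, ProbabilityTheory.IdentDistrib (fun ω => X ω i) (fun ω => Z ω i) ℙ ℙ :=
    hZq ▸ fun i => identDistrib_quantile (hXi i) (fun ω => hXpos ω i) hUm hU
  rw [integral_sum_max_sub_pbar_eq hπ hrs hpb hfix hXm hXpos hXint,
    integral_sum_max_sub_pbar_eq hπ hrs hpb hfix hZm hZ0 fun i =>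
      (hXZ i).integrable_iff.1 (hXint i),
    Finset.sum_congr rfl fun i _ => (hXZ i).integral_eq]
  linarith [integral_paymentToSociety_le hπ hrs hpb hfix hXm hZm (fun ω i => hXpos ω i) hZ0 hXZ
    (hZq ▸ isComonotone_quantile hUm hU _)]

/-- In the Eisenberg–Noe setting under the regularity assumption, for an integrable random
endowment vector `X` and its comonotonic version `Z_i = F_{X_i}^{-1}(U)` (with `U` uniform on
`[0,1]`), the total expected equity of the banking sector is maximized by the comonotonic
endowments: `Σ_i 𝔼[V_i(X)⁺] ≤ Σ_i 𝔼[V_i(Z)⁺]`. -/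
theorem comonotonic_maximizes_total_equity (n : ℕ) (hn : 1 ≤ n)
    (L : Matrix (Fin n) (Fin (n + 1)) ℝ)
    (hL : ∀ i j, 0 ≤ L i j) (hLdiag : ∀ i : Fin n, L i i.castSucc = 0)
    (hreg : ∀ i, 0 < pbar L i ∧ ∑ j, relLiab L i j < 1)
    (P : (Fin n → ℝ) → (Fin n → ℝ))
    (hP : ∀ x : Fin n → ℝ, (∀ i, 0 ≤ x i) → IsGreatestClearingPayment L x (P x))
    (Ω : Type) (mΩ : MeasurableSpace Ω) (ℙ : Measure Ω) (hprob : IsProbabilityMeasure ℙ)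
    (X : Ω → Fin n → ℝ) (hXm : Measurable X) (hXpos : ∀ ω i, 0 ≤ X ω i)
    (hXint : ∀ i, Integrable (fun ω => X ω i) ℙ)
    (U : Ω → ℝ) (hUm : Measurable U)
    (hU : ℙ.map U = volume.restrict (Set.Icc (0 : ℝ) 1))
    (Z : Ω → Fin n → ℝ)
    (hZ : ∀ ω i, Z ω i = sInf {t : ℝ | 0 ≤ t ∧ U ω ≤ (ℙ {ω' | X ω' i ≤ t}).toReal}) :
    ∑ i, ∫ ω, max (X ω i + (∑ j, relLiab L j i * P (X ω) j) - pbar L i) 0 ∂ℙ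
      ≤ ∑ i, ∫ ω, max (Z ω i + (∑ j, relLiab L j i * P (Z ω) j) - pbar L i) 0 ∂ℙ :=
  comonotonic_maximizes_total_equity_general n hn L hL hreg P hP Ω mΩ ℙ hprob X hXm hXpos hXint U
    hUm hU Z hZ
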